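/- arXiv:1107.0614 — 7 statements merged into one kernel-verified Lean document; each statement's English description precedes it below -/
import Mathlib

section
/- Let φ : [0,π/2] → ℝ be continuous with φ(θ) > 0 for all θ ∈ [0,π/2], and define η(x,y) := (x²+y²)^{−3/2}·φ(arctan(y/x)) for x, y > 0. Then η(u, v·w)/η(u,v) → 1 as w → 1, uniformly in u, v > 0; i.e., for every ε > 0 there exists δ > 0 such that for all w with |w − 1| ≤ δ and all u, v > 0, |η(u, v·w)/η(u,v) − 1| ≤ ε. -/
open Set

lemma my_abs_arctan_le (x : ℝ) : |Real.arctan x| ≤ |x| := by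
  have key : ∀ y : ℝ, 0 ≤ y → Real.arctan y ≤ y := by
    intro y hy
    have h0 : 0 ≤ Real.arctan y := by
      simpa using Real.arctan_strictMono.monotone hy
    calc Real.arctan y ≤ Real.tan (Real.arctan y) :=
          Real.le_tan h0 (Real.arctan_lt_pi_div_two y)
      _ = y := Real.tan_arctan y
  rcases le_total 0 x with h | h
  · rw [abs_of_nonneg (by simpa using Real.arctan_strictMono.monotone h),
      abs_of_nonneg h]
    exact key x h
  · have hx : 0 ≤ -x := by linarith
    have := key (-x) hx
    rw [Real.arctan_neg] at this
    have h0 : Real.arctan x ≤ 0 := by simpa using Real.arctan_strictMono.monotone h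
    rw [abs_of_nonpos h0, abs_of_nonpos h]
    linarith

lemma my_aux_arctan (t w : ℝ) (ht : 0 < t) (hwl : 1/2 ≤ w) :
    |Real.arctan (t * w) - Real.arctan t| ≤ 2 * |w - 1| := by
  have hw0 : 0 < w := by linarith
  have htw : 0 < t * w * t := by positivity
  have hlt : t * w * (-t) < 1 := by nlinarith
  have key := Real.arctan_add hlt
  rw [Real.arctan_neg] at key
  have hsub : Real.arctan (t * w) - Real.arctan t
      = Real.arctan ((t * w - t) / (1 + t * w * t)) := by
    have h1 : Real.arctan (t * w) - Real.arctan t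
        = Real.arctan ((t * w + -t) / (1 - t * w * -t)) := by linarith [key]
    rw [h1]
    congr 1
    ring
  rw [hsub]
  have habs : 0 ≤ |w - 1| := abs_nonneg _
  have hden : (0:ℝ) < 1 + t * w * t := by linarith
  calc |Real.arctan ((t * w - t) / (1 + t * w * t))|
      ≤ |(t * w - t) / (1 + t * w * t)| := my_abs_arctan_le _
    _ ≤ 2 * |w - 1| := by
        rw [abs_div, abs_of_pos hden, div_le_iff₀ hden]
        have heq : |t * w - t| = t * |w - 1| := by
          rw [show t * w - t = t * (w - 1) by ring, abs_mul, abs_of_pos ht]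
        rw [heq]
        have hkey : t ≤ 2 * (1 + t * w * t) := by nlinarith [sq_nonneg (t - 1)]
        nlinarith [mul_le_mul_of_nonneg_right hkey habs]

lemma my_aux_c_bound (w ε : ℝ) (hε : 0 < ε) (hw : |w - 1| ≤ ε/152)
    (hwl : 1/2 ≤ w) (hwu : w ≤ 3/2) : |(w^3)⁻¹ - 1| ≤ ε/4 := by
  have hw0 : (0:ℝ) < w := by linarith
  have hw3 : (0:ℝ) < w^3 := by positivity
  have hw3c : w^3 * (w^3)⁻¹ = 1 := mul_inv_cancel₀ hw3.ne'
  obtain ⟨hl, hr⟩ := abs_le.mp hw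
  have h8 : (1:ℝ)/8 ≤ w^3 := by nlinarith [sq_nonneg (w - 1/2), sq_nonneg w]
  have hq : (0:ℝ) ≤ 1 + w + w^2 := by positivity
  have h1w : 1 - w ≤ ε/152 := by linarith
  have hw1 : w - 1 ≤ ε/152 := hr
  have hqub : (0:ℝ) ≤ 19/4 - (1 + w + w^2) := by nlinarith
  have step1 : 1 - w^3 ≤ ε/4 * w^3 := by
    nlinarith [mul_le_mul_of_nonneg_right h1w hq, mul_nonneg hε.le hqub,
      mul_le_mul_of_nonneg_left h8 hε.le]
  have step2 : w^3 - 1 ≤ ε/4 * w^3 := by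
    nlinarith [mul_le_mul_of_nonneg_right hw1 hq, mul_nonneg hε.le hqub,
      mul_le_mul_of_nonneg_left h8 hε.le]
  rw [abs_le]
  constructor
  · nlinarith [hw3c, hw3, step2]
  · nlinarith [hw3c, hw3, step1]

lemma my_aux_cval (w : ℝ) (hw0 : 0 < w) : ((w^2 : ℝ)) ^ (-(3:ℝ)/2) = (w^3)⁻¹ := by
  rw [← Real.rpow_natCast w 2, ← Real.rpow_mul hw0.le]
  rw [show ((2:ℕ):ℝ) * (-(3:ℝ)/2) = -((3:ℕ):ℝ) by norm_num]
  rw [Real.rpow_neg hw0.le, Real.rpow_natCast]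

lemma my_aux_A_bound (u v w : ℝ) (hu : 0 < u) (hv : 0 < v)
    (hwl : 1/2 ≤ w) (hwu : w ≤ 3/2) :
    |(u^2 + (v*w)^2) ^ (-(3:ℝ)/2) / (u^2 + v^2) ^ (-(3:ℝ)/2) - 1| ≤ |(w^3)⁻¹ - 1| := by
  have hw0 : 0 < w := by linarith
  have hs : (0:ℝ) < u^2 + v^2 := by positivity
  have hs' : (0:ℝ) < u^2 + (v*w)^2 := by positivity
  have hsp : (0:ℝ) < (u^2 + v^2) ^ (-(3:ℝ)/2) := Real.rpow_pos_of_pos hs _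
  have hsp' : (0:ℝ) < (u^2 + (v*w)^2) ^ (-(3:ℝ)/2) := Real.rpow_pos_of_pos hs' _
  have hpneg : (-(3:ℝ)/2) ≤ 0 := by norm_num
  have hmul : ((w^2) * (u^2 + v^2)) ^ (-(3:ℝ)/2)
      = (w^2) ^ (-(3:ℝ)/2) * (u^2 + v^2) ^ (-(3:ℝ)/2) :=
    Real.mul_rpow (by positivity) hs.le
  rw [show ((w^3)⁻¹ : ℝ) = (w^2) ^ (-(3:ℝ)/2) from (my_aux_cval w hw0).symm]
  set A : ℝ := (u^2 + (v*w)^2) ^ (-(3:ℝ)/2) / (u^2 + v^2) ^ (-(3:ℝ)/2) with hA_def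
  set c : ℝ := (w^2) ^ (-(3:ℝ)/2) with hc_def
  have hrange : (A - 1 ≤ c - 1 ∧ 0 ≤ A - 1) ∨ (c - 1 ≤ A - 1 ∧ A - 1 ≤ 0) := by
    rcases le_total w 1 with hwle | hwge
    · left
      have hw2 : w^2 ≤ 1 := by nlinarith
      have h1 : w^2 * (u^2 + v^2) ≤ u^2 + (v*w)^2 := by
        nlinarith [mul_le_mul_of_nonneg_left hw2 (sq_nonneg u)]
      have h2 : u^2 + (v*w)^2 ≤ u^2 + v^2 := by
        nlinarith [mul_le_mul_of_nonneg_left hw2 (sq_nonneg v)]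
      have hA1 : (u^2 + v^2) ^ (-(3:ℝ)/2) ≤ (u^2 + (v*w)^2) ^ (-(3:ℝ)/2) :=
        Real.rpow_le_rpow_of_nonpos hs' h2 hpneg
      have hA2 : (u^2 + (v*w)^2) ^ (-(3:ℝ)/2) ≤ (w^2 * (u^2 + v^2)) ^ (-(3:ℝ)/2) :=
        Real.rpow_le_rpow_of_nonpos (by positivity) h1 hpneg
      constructor
      · rw [sub_le_sub_iff_right, hA_def, div_le_iff₀ hsp, hc_def]
        calc (u^2 + (v*w)^2) ^ (-(3:ℝ)/2) ≤ (w^2 * (u^2 + v^2)) ^ (-(3:ℝ)/2) := hA2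
          _ = (w^2) ^ (-(3:ℝ)/2) * (u^2 + v^2) ^ (-(3:ℝ)/2) := hmul
      · rw [sub_nonneg, hA_def, le_div_iff₀ hsp, one_mul]
        exact hA1
    · right
      have hw2 : 1 ≤ w^2 := by nlinarith
      have h1 : u^2 + v^2 ≤ u^2 + (v*w)^2 := by
        nlinarith [mul_le_mul_of_nonneg_left hw2 (sq_nonneg v)]
      have h2 : u^2 + (v*w)^2 ≤ w^2 * (u^2 + v^2) := by
        nlinarith [mul_le_mul_of_nonneg_left hw2 (sq_nonneg u)]
      have hA1 : (u^2 + (v*w)^2) ^ (-(3:ℝ)/2) ≤ (u^2 + v^2) ^ (-(3:ℝ)/2) :=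
        Real.rpow_le_rpow_of_nonpos hs h1 hpneg
      have hA2 : (w^2 * (u^2 + v^2)) ^ (-(3:ℝ)/2) ≤ (u^2 + (v*w)^2) ^ (-(3:ℝ)/2) :=
        Real.rpow_le_rpow_of_nonpos hs' h2 hpneg
      constructor
      · rw [sub_le_sub_iff_right, hA_def, le_div_iff₀ hsp, hc_def]
        calc (w^2) ^ (-(3:ℝ)/2) * (u^2 + v^2) ^ (-(3:ℝ)/2)
            = (w^2 * (u^2 + v^2)) ^ (-(3:ℝ)/2) := hmul.symm
          _ ≤ (u^2 + (v*w)^2) ^ (-(3:ℝ)/2) := hA2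
      · rw [sub_nonpos, hA_def, div_le_iff₀ hsp, one_mul]
        exact hA1
  rcases hrange with ⟨h1, h2⟩ | ⟨h1, h2⟩
  · rw [abs_of_nonneg h2]
    exact h1.trans (le_abs_self _)
  · rw [abs_of_nonpos h2]
    have : -(c - 1) ≤ |c - 1| := neg_le_abs _
    linarith

lemma my_aux_combine (A B ε : ℝ) (hε : 0 < ε)
    (hA : |A - 1| ≤ ε/4) (hB : |B - 1| ≤ min (ε/2) 1) : |A * B - 1| ≤ ε := by
  have hBabs : |B| ≤ 2 := by
    have h1 : |B| ≤ |B - 1| + 1 := by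
      calc |B| = |(B - 1) + 1| := by ring_nf
        _ ≤ |B - 1| + |1| := abs_add_le _ _
        _ = |B - 1| + 1 := by rw [abs_one]
    have hB1 : |B - 1| ≤ 1 := hB.trans (min_le_right _ _)
    linarith
  have hBε : |B - 1| ≤ ε/2 := hB.trans (min_le_left _ _)
  calc |A * B - 1| = |(A - 1) * B + (B - 1)| := by ring_nf
    _ ≤ |(A - 1) * B| + |B - 1| := abs_add_le _ _
    _ = |A - 1| * |B| + |B - 1| := by rw [abs_mul]
    _ ≤ (ε/4) * 2 + ε/2 := by
        have h1 : |A - 1| * |B| ≤ (ε/4) * 2 :=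
          mul_le_mul hA hBabs (abs_nonneg _) (by positivity)
        linarith
    _ = ε := by ring

/-- For the exponent measure density `η(x,y) = (x²+y²)^{-3/2} φ(arctan(y/x))` with
continuous strictly positive spectral density `φ`, the ratio `η(u,vw)/η(u,v)`
tends to `1` as `w → 1`, uniformly in `u, v > 0`. -/
theorem density_ratio_uniform
    (φ : ℝ → ℝ) (hφc : ContinuousOn φ (Set.Icc 0 (Real.pi / 2)))
    (hφpos : ∀ θ ∈ Set.Icc 0 (Real.pi / 2), 0 < φ θ) :
    ∀ ε : ℝ, 0 < ε → ∃ δ : ℝ, 0 < δ ∧ ∀ w : ℝ, |w - 1| ≤ δ →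
      ∀ u v : ℝ, 0 < u → 0 < v →
        |((u ^ 2 + (v * w) ^ 2) ^ (-(3 : ℝ) / 2) * φ (Real.arctan (v * w / u))) /
            ((u ^ 2 + v ^ 2) ^ (-(3 : ℝ) / 2) * φ (Real.arctan (v / u))) - 1| ≤ ε := by
  intro ε hε
  have hne : (Set.Icc (0:ℝ) (Real.pi/2)).Nonempty :=
    ⟨0, by constructor <;> [rfl; positivity]⟩
  obtain ⟨θm, hθm, hminOn⟩ := isCompact_Icc.exists_isMinOn hne hφc
  have hmin : ∀ θ ∈ Set.Icc (0:ℝ) (Real.pi/2), φ θm ≤ φ θ := fun θ hθ => hminOn hθ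
  have hm0 : 0 < φ θm := hφpos θm hθm
  have huc := isCompact_Icc.uniformContinuousOn_of_continuous hφc
  rw [Metric.uniformContinuousOn_iff] at huc
  obtain ⟨δ₁, hδ₁, hδ₁'⟩ := huc (φ θm * min (ε/2) 1) (by positivity)
  refine ⟨min (δ₁/4) (min (ε/152) (1/2)), by positivity, ?_⟩
  intro w hw u v hu hv
  have hwδ : |w - 1| ≤ δ₁/4 := hw.trans (min_le_left _ _)
  have hwε : |w - 1| ≤ ε/152 := hw.trans ((min_le_right _ _).trans (min_le_left _ _))
  have hwh : |w - 1| ≤ 1/2 := hw.trans ((min_le_right _ _).trans (min_le_right _ _))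
  obtain ⟨hwl', hwu'⟩ := abs_le.mp hwh
  have hwl : (1:ℝ)/2 ≤ w := by linarith
  have hwu : w ≤ 3/2 := by linarith
  have hw0 : 0 < w := by linarith
  have ht : 0 < v / u := by positivity
  have harg : v * w / u = (v / u) * w := by ring
  have hθmem : Real.arctan (v / u) ∈ Set.Icc (0:ℝ) (Real.pi/2) := by
    constructor
    · simpa using Real.arctan_strictMono.monotone ht.le
    · exact (Real.arctan_lt_pi_div_two _).le
  have hθ'mem : Real.arctan (v * w / u) ∈ Set.Icc (0:ℝ) (Real.pi/2) := by
    constructor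
    · have h0 : (0:ℝ) ≤ v * w / u := by positivity
      simpa using Real.arctan_strictMono.monotone h0
    · exact (Real.arctan_lt_pi_div_two _).le
  have hdiff : |Real.arctan (v * w / u) - Real.arctan (v / u)| ≤ 2 * |w - 1| := by
    rw [harg]
    exact my_aux_arctan (v / u) w ht hwl
  have hdist : dist (Real.arctan (v * w / u)) (Real.arctan (v / u)) < δ₁ := by
    rw [Real.dist_eq]
    calc |Real.arctan (v * w / u) - Real.arctan (v / u)| ≤ 2 * |w - 1| := hdiff
      _ ≤ 2 * (δ₁/4) := by linarith
      _ < δ₁ := by linarith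
  have hφd := hδ₁' _ hθ'mem _ hθmem hdist
  rw [Real.dist_eq] at hφd
  have hφθ : 0 < φ (Real.arctan (v / u)) := hφpos _ hθmem
  have hmθ : φ θm ≤ φ (Real.arctan (v / u)) := hmin _ hθmem
  have hB : |φ (Real.arctan (v * w / u)) / φ (Real.arctan (v / u)) - 1| ≤ min (ε/2) 1 := by
    rw [div_sub_one hφθ.ne', abs_div, abs_of_pos hφθ, div_le_iff₀ hφθ]
    have h1 : φ θm * min (ε/2) 1 ≤ φ (Real.arctan (v / u)) * min (ε/2) 1 :=
      mul_le_mul_of_nonneg_right hmθ (le_min (by positivity) (by norm_num))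
    calc |φ (Real.arctan (v * w / u)) - φ (Real.arctan (v / u))|
        ≤ φ θm * min (ε/2) 1 := hφd.le
      _ ≤ φ (Real.arctan (v / u)) * min (ε/2) 1 := h1
      _ = min (ε/2) 1 * φ (Real.arctan (v / u)) := by ring
  have hAε : |(u^2 + (v*w)^2) ^ (-(3:ℝ)/2) / (u^2 + v^2) ^ (-(3:ℝ)/2) - 1| ≤ ε/4 :=
    (my_aux_A_bound u v w hu hv hwl hwu).trans (my_aux_c_bound w ε hε hwε hwl hwu)
  have hs : (0:ℝ) < u^2 + v^2 := by positivity
  have hs' : (0:ℝ) < u^2 + (v*w)^2 := by positivity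
  have hsp : (0:ℝ) < (u^2 + v^2) ^ (-(3:ℝ)/2) := Real.rpow_pos_of_pos hs _
  have hsp' : (0:ℝ) < (u^2 + (v*w)^2) ^ (-(3:ℝ)/2) := Real.rpow_pos_of_pos hs' _
  have hsplit : ((u ^ 2 + (v * w) ^ 2) ^ (-(3 : ℝ) / 2) * φ (Real.arctan (v * w / u))) /
      ((u ^ 2 + v ^ 2) ^ (-(3 : ℝ) / 2) * φ (Real.arctan (v / u)))
      = ((u^2 + (v*w)^2) ^ (-(3:ℝ)/2) / (u^2 + v^2) ^ (-(3:ℝ)/2))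
        * (φ (Real.arctan (v * w / u)) / φ (Real.arctan (v / u))) := by
    field_simp
  rw [hsplit]
  exact my_aux_combine _ _ ε hε hAε hB
end

section
/- Let K > 0 and let η : (0,∞)² → [0,∞) be a measurable function satisfying η(x,y) ≤ K·(x²+y²)^{−3/2} for all x, y > 0, and let q : (0,∞) → (0,∞) be non-increasing. Then ∫_0^∞ q(u)·η(u, q(u)) du < ∞; indeed, for every x₀ > 0 this integral is at most K·(x₀/q(x₀)² + q(x₀)/(2·x₀²)). -/
/-!
Split `(0, ∞)` at `x₀` and use that `q` is non-increasing. On `(0, x₀]` we have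
`q u ≥ q x₀`, and `(u² + q²)^{-3/2} ≤ q^{-3}` bounds the integrand by `K / q(x₀)²`, over an
interval of length `x₀`. On `(x₀, ∞)` we have `q u ≤ q x₀`, and `(u² + q²)^{-3/2} ≤ u^{-3}`
bounds the integrand by `K q(x₀) u^{-3}`, whose integral is `K q(x₀) / (2 x₀²)`.
-/

open MeasureTheory Set

theorem sq_add_sq_rpow_neg_half_le {x : ℝ} (hx : 0 < x) (y : ℝ) {p : ℝ} (hp : 0 ≤ p) :
    (x ^ 2 + y ^ 2) ^ (-p / 2) ≤ x ^ (-p) :=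
  calc (x ^ 2 + y ^ 2) ^ (-p / 2) ≤ (x ^ 2) ^ (-p / 2) :=
        Real.rpow_le_rpow_of_nonpos (by positivity) (by nlinarith [sq_nonneg y]) (by linarith)
    _ = x ^ (-p) := by rw [← Real.rpow_two, ← Real.rpow_mul hx.le]; ring_nf

theorem mul_sq_add_sq_rpow_neg_three_halves_le {y : ℝ} (hy : 0 < y) (x : ℝ) :
    y * (x ^ 2 + y ^ 2) ^ (-(3 : ℝ) / 2) ≤ (y ^ 2)⁻¹ :=
  calc y * (x ^ 2 + y ^ 2) ^ (-(3 : ℝ) / 2) ≤ y * y ^ (-(3 : ℝ)) := by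
        rw [add_comm]; gcongr; exact sq_add_sq_rpow_neg_half_le hy x (by norm_num)
    _ = (y ^ 2)⁻¹ := by
        rw [Real.rpow_neg hy.le, Real.rpow_ofNat]; field_simp

theorem lintegral_Ioi_rpow_of_lt {a : ℝ} (ha : a < -1) {c : ℝ} (hc : 0 < c) :
    ∫⁻ t in Ioi c, ENNReal.ofReal (t ^ a) = ENNReal.ofReal (-c ^ (a + 1) / (a + 1)) := by
  rw [← integral_Ioi_rpow_of_lt ha hc, ofReal_integral_eq_lintegral_ofReal
    (integrableOn_Ioi_rpow_of_lt ha hc)]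
  filter_upwards [ae_restrict_mem measurableSet_Ioi] with t ht
  exact Real.rpow_nonneg (hc.trans ht).le a

theorem lintegral_Ioi_rpow_neg_three {c : ℝ} (hc : 0 < c) :
    ∫⁻ t in Ioi c, ENNReal.ofReal (t ^ (-3 : ℝ)) = ENNReal.ofReal ((2 * c ^ 2)⁻¹) := by
  rw [lintegral_Ioi_rpow_of_lt (by norm_num) hc]
  congr 1
  norm_num [Real.rpow_neg hc.le]
  ring

theorem setLIntegral_Ioc_boundary_le {K : ℝ} (hK : 0 ≤ K) {η : ℝ × ℝ → ℝ}
    (hηbd : ∀ x y : ℝ, 0 < x → 0 < y → η (x, y) ≤ K * (x ^ 2 + y ^ 2) ^ (-(3 : ℝ) / 2))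
    {q : ℝ → ℝ} (hq : AntitoneOn q (Ioi 0)) (hqpos : ∀ x : ℝ, 0 < x → 0 < q x)
    {x₀ : ℝ} (hx₀ : 0 < x₀) :
    ∫⁻ u in Ioc 0 x₀, ENNReal.ofReal (q u * η (u, q u)) ≤
      ENNReal.ofReal (K * x₀ / q x₀ ^ 2) := by
  have bound : ∀ u ∈ Ioc 0 x₀,
      ENNReal.ofReal (q u * η (u, q u)) ≤ ENNReal.ofReal (K / q x₀ ^ 2) := by
    rintro u ⟨hu, hux₀⟩
    have hqu := hqpos u hu
    have hqx₀ := hqpos x₀ hx₀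
    apply ENNReal.ofReal_le_ofReal
    calc q u * η (u, q u) ≤ K * (q u * (u ^ 2 + q u ^ 2) ^ (-(3 : ℝ) / 2)) := by
          nlinarith [hηbd u (q u) hu hqu]
      _ ≤ K * (q u ^ 2)⁻¹ := by gcongr; exact mul_sq_add_sq_rpow_neg_three_halves_le hqu u
      _ ≤ K / q x₀ ^ 2 := by
          rw [← div_eq_mul_inv]
          gcongr
          exact hq hu hx₀ hux₀
  calc ∫⁻ u in Ioc 0 x₀, ENNReal.ofReal (q u * η (u, q u))
      ≤ ∫⁻ _ in Ioc 0 x₀, ENNReal.ofReal (K / q x₀ ^ 2) :=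
        setLIntegral_mono' measurableSet_Ioc bound
    _ = ENNReal.ofReal (K * x₀ / q x₀ ^ 2) := by
        rw [setLIntegral_const, Real.volume_Ioc, sub_zero,
          ← ENNReal.ofReal_mul (by positivity)]
        ring_nf

theorem setLIntegral_Ioi_boundary_le {K : ℝ} (hK : 0 ≤ K) {η : ℝ × ℝ → ℝ}
    (hηbd : ∀ x y : ℝ, 0 < x → 0 < y → η (x, y) ≤ K * (x ^ 2 + y ^ 2) ^ (-(3 : ℝ) / 2))
    {q : ℝ → ℝ} (hq : AntitoneOn q (Ioi 0)) (hqpos : ∀ x : ℝ, 0 < x → 0 < q x)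
    {x₀ : ℝ} (hx₀ : 0 < x₀) :
    ∫⁻ u in Ioi x₀, ENNReal.ofReal (q u * η (u, q u)) ≤
      ENNReal.ofReal (K * q x₀ / (2 * x₀ ^ 2)) := by
  have bound : ∀ u ∈ Ioi x₀, ENNReal.ofReal (q u * η (u, q u)) ≤
      ENNReal.ofReal (K * q x₀) * ENNReal.ofReal (u ^ (-3 : ℝ)) := by
    intro u hx₀u
    have hu : 0 < u := hx₀.trans hx₀u
    have hqu := hqpos u hu
    have hqx₀ := hqpos x₀ hx₀
    rw [← ENNReal.ofReal_mul (by positivity)]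
    apply ENNReal.ofReal_le_ofReal
    calc q u * η (u, q u) ≤ K * q u * (u ^ 2 + q u ^ 2) ^ (-(3 : ℝ) / 2) := by
          nlinarith [hηbd u (q u) hu hqu]
      _ ≤ K * q x₀ * u ^ (-3 : ℝ) := by
          gcongr
          · exact hq hx₀ hu hx₀u.le
          · exact sq_add_sq_rpow_neg_half_le hu (q u) (by norm_num)
  calc ∫⁻ u in Ioi x₀, ENNReal.ofReal (q u * η (u, q u))
      ≤ ∫⁻ u in Ioi x₀, ENNReal.ofReal (K * q x₀) * ENNReal.ofReal (u ^ (-3 : ℝ)) :=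
        setLIntegral_mono' measurableSet_Ioi bound
    _ = ENNReal.ofReal (K * q x₀ / (2 * x₀ ^ 2)) := by
        rw [lintegral_const_mul' _ _ ENNReal.ofReal_ne_top, lintegral_Ioi_rpow_neg_three hx₀,
          ← ENNReal.ofReal_mul (by positivity [hqpos x₀ hx₀]), div_eq_mul_inv]

theorem boundary_integral_finite_general
    (K : ℝ) (hK : 0 < K) (η : ℝ × ℝ → ℝ)
    (hηbd : ∀ x y : ℝ, 0 < x → 0 < y → η (x, y) ≤ K * (x ^ 2 + y ^ 2) ^ (-(3 : ℝ) / 2))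
    (q : ℝ → ℝ) (hq : AntitoneOn q (Set.Ioi 0)) (hqpos : ∀ x : ℝ, 0 < x → 0 < q x) :
    (∫⁻ u in Set.Ioi (0 : ℝ), ENNReal.ofReal (q u * η (u, q u))) < ⊤ ∧
    ∀ x₀ : ℝ, 0 < x₀ →
      (∫⁻ u in Set.Ioi (0 : ℝ), ENNReal.ofReal (q u * η (u, q u))) ≤
        ENNReal.ofReal (K * (x₀ / (q x₀) ^ 2 + q x₀ / (2 * x₀ ^ 2))) := by
  have bound : ∀ x₀ : ℝ, 0 < x₀ →
      (∫⁻ u in Ioi (0 : ℝ), ENNReal.ofReal (q u * η (u, q u))) ≤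
        ENNReal.ofReal (K * (x₀ / (q x₀) ^ 2 + q x₀ / (2 * x₀ ^ 2))) := by
    intro x₀ hx₀
    have hqx₀ := hqpos x₀ hx₀
    rw [← Ioc_union_Ioi_eq_Ioi hx₀.le, lintegral_union measurableSet_Ioi Ioc_disjoint_Ioi_same]
    calc _ ≤ ENNReal.ofReal (K * x₀ / q x₀ ^ 2) +
          ENNReal.ofReal (K * q x₀ / (2 * x₀ ^ 2)) :=
          add_le_add (setLIntegral_Ioc_boundary_le hK.le hηbd hq hqpos hx₀)
            (setLIntegral_Ioi_boundary_le hK.le hηbd hq hqpos hx₀)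
      _ = ENNReal.ofReal (K * (x₀ / q x₀ ^ 2 + q x₀ / (2 * x₀ ^ 2))) := by
          rw [← ENNReal.ofReal_add (by positivity) (by positivity)]
          ring_nf
  exact ⟨(bound 1 one_pos).trans_lt ENNReal.ofReal_lt_top, bound⟩

/-- Finiteness (with an explicit bound) of `∫_0^∞ q(u) η(u, q(u)) du` for a density
`η` bounded by `K (x²+y²)^{-3/2}` and a non-increasing `q : (0,∞) → (0,∞)`. -/
theorem boundary_integral_finite
    (K : ℝ) (hK : 0 < K) (η : ℝ × ℝ → ℝ) (hηmeas : Measurable η)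
    (hηpos : ∀ x y : ℝ, 0 < x → 0 < y → 0 ≤ η (x, y))
    (hηbd : ∀ x y : ℝ, 0 < x → 0 < y → η (x, y) ≤ K * (x ^ 2 + y ^ 2) ^ (-(3 : ℝ) / 2))
    (q : ℝ → ℝ) (hq : AntitoneOn q (Set.Ioi 0)) (hqpos : ∀ x : ℝ, 0 < x → 0 < q x) :
    (∫⁻ u in Set.Ioi (0 : ℝ), ENNReal.ofReal (q u * η (u, q u))) < ⊤ ∧
    ∀ x₀ : ℝ, 0 < x₀ →
      (∫⁻ u in Set.Ioi (0 : ℝ), ENNReal.ofReal (q u * η (u, q u))) ≤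
        ENNReal.ofReal (K * (x₀ / (q x₀) ^ 2 + q x₀ / (2 * x₀ ^ 2))) :=
  boundary_integral_finite_general K hK η hηbd q hq hqpos
end

section
/- Let K > 0 and let η : (0,∞)² → [0,∞) be a measurable function satisfying η(x,y) ≤ K·(x²+y²)^{−3/2} for all x, y > 0, and let q : (0,∞) → (0,∞) be non-increasing. Then ∫_0^∞ q(u)·(1 + |log q(u)|)·η(u, q(u)) du < ∞. -/
/-!
Split `(0, ∞)` at `u = 1` and put `c = q 1`. The kernel is at most `min (u⁻³) (q(u)⁻³)`, and
`t (1 + |log t|) ≤ 1 + t + t²`. On `(0, 1]` we have `q u ≥ c`, so the integrand is at most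
`K (1 + t + t²) / t³` with `t = q u ≥ c`, a bounded quantity; on `(1, ∞)` we have `q u ≤ c`, so the
integrand is at most `K (1 + c + c²) u⁻³`, which is integrable at infinity.
-/

open MeasureTheory Set Real

lemma abs_log_le_add_inv {t : ℝ} (ht : 0 < t) : |log t| ≤ t + t⁻¹ := by
  have hlog := log_le_sub_one_of_pos ht
  have hlog_inv := log_le_sub_one_of_pos (inv_pos.2 ht)
  rw [log_inv] at hlog_inv
  rw [abs_le]
  constructor <;> linarith [inv_pos.2 ht]

lemma mul_one_add_abs_log_le {t : ℝ} (ht : 0 < t) : t * (1 + |log t|) ≤ 1 + t + t ^ 2 := by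
  have h := mul_le_mul_of_nonneg_left (abs_log_le_add_inv ht) ht.le
  rw [mul_add, mul_inv_cancel₀ ht.ne'] at h
  nlinarith

lemma sq_add_sq_rpow_neg_three_halves_le {x y : ℝ} (hy : 0 < y) :
    (x ^ 2 + y ^ 2) ^ (-(3 : ℝ) / 2) ≤ (y ^ 3)⁻¹ :=
  calc (x ^ 2 + y ^ 2) ^ (-(3 : ℝ) / 2) ≤ (y ^ 2) ^ (-(3 : ℝ) / 2) :=
        rpow_le_rpow_of_nonpos (by positivity) (by nlinarith) (by norm_num)
    _ = (y ^ 3)⁻¹ := by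
        rw [← rpow_natCast y 2, ← rpow_mul hy.le, ← rpow_natCast, ← rpow_neg hy.le]
        norm_num

lemma mul_one_add_abs_log_mul_le {K x y e : ℝ} (hK : 0 ≤ K) (hx : 0 < x) (hy : 0 < y)
    (he : e ≤ K * (x ^ 2 + y ^ 2) ^ (-(3 : ℝ) / 2)) :
    y * (1 + |log y|) * e ≤ min (K * (1 + y + y ^ 2) / x ^ 3) (K * (1 + y + y ^ 2) / y ^ 3) := by
  have hkernel : (x ^ 2 + y ^ 2) ^ (-(3 : ℝ) / 2) ≤ min (x ^ 3)⁻¹ (y ^ 3)⁻¹ :=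
    le_min (add_comm (x ^ 2) _ ▸ sq_add_sq_rpow_neg_three_halves_le hx)
      (sq_add_sq_rpow_neg_three_halves_le hy)
  calc y * (1 + |log y|) * e ≤ y * (1 + |log y|) * (K * (x ^ 2 + y ^ 2) ^ (-(3 : ℝ) / 2)) := by
        gcongr
    _ ≤ (1 + y + y ^ 2) * (K * (x ^ 2 + y ^ 2) ^ (-(3 : ℝ) / 2)) := by
        gcongr
        exact mul_one_add_abs_log_le hy
    _ = K * (1 + y + y ^ 2) * (x ^ 2 + y ^ 2) ^ (-(3 : ℝ) / 2) := by ring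
    _ ≤ K * (1 + y + y ^ 2) * min (x ^ 3)⁻¹ (y ^ 3)⁻¹ := by gcongr
    _ = min (K * (1 + y + y ^ 2) / x ^ 3) (K * (1 + y + y ^ 2) / y ^ 3) := by
        simp only [div_eq_mul_inv]
        exact mul_min_of_nonneg _ _ (by positivity)

lemma antitoneOn_one_add_add_sq_div_pow_three :
    AntitoneOn (fun t : ℝ => (1 + t + t ^ 2) / t ^ 3) (Ioi 0) := by
  intro a (ha : 0 < a) b (hb : 0 < b) hab
  have expand : ∀ t : ℝ, 0 < t → (1 + t + t ^ 2) / t ^ 3 = t⁻¹ ^ 3 + t⁻¹ ^ 2 + t⁻¹ := by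
    intro t ht
    field_simp
  simp only [expand a ha, expand b hb]
  have : b⁻¹ ≤ a⁻¹ := inv_anti₀ ha hab
  gcongr

lemma setLIntegral_Ioi_zero_ofReal_lt_top {f : ℝ → ℝ} {B M p : ℝ} (hp : 1 < p)
    (h_near : ∀ u ∈ Ioc 0 1, f u ≤ B) (h_far : ∀ u ∈ Ioi 1, f u ≤ M * u ^ (-p)) :
    ∫⁻ u in Ioi 0, ENNReal.ofReal (f u) < ⊤ := by
  rw [← Ioc_union_Ioi_eq_Ioi zero_le_one, lintegral_union measurableSet_Ioi Ioc_disjoint_Ioi_same]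
  refine ENNReal.add_lt_top.2 ⟨?_, ?_⟩
  · calc ∫⁻ u in Ioc 0 1, ENNReal.ofReal (f u) ≤ ∫⁻ _ in Ioc (0 : ℝ) 1, ENNReal.ofReal B :=
          setLIntegral_mono' measurableSet_Ioc fun u hu => ENNReal.ofReal_le_ofReal (h_near u hu)
      _ < ⊤ := by simp
  · have h_int : IntegrableOn (fun u : ℝ => M * u ^ (-p)) (Ioi 1) :=
      (integrableOn_Ioi_rpow_of_lt (by linarith) one_pos).const_mul M
    calc ∫⁻ u in Ioi 1, ENNReal.ofReal (f u) ≤ ∫⁻ u in Ioi 1, ENNReal.ofReal (M * u ^ (-p)) :=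
          setLIntegral_mono' measurableSet_Ioi fun u hu => ENNReal.ofReal_le_ofReal (h_far u hu)
      _ < ⊤ := h_int.setLIntegral_lt_top

theorem boundary_log_integral_finite_general
    (K : ℝ) (hK : 0 < K) (η : ℝ × ℝ → ℝ)
    (hηbd : ∀ x y : ℝ, 0 < x → 0 < y → η (x, y) ≤ K * (x ^ 2 + y ^ 2) ^ (-(3 : ℝ) / 2))
    (q : ℝ → ℝ) (hq : AntitoneOn q (Set.Ioi 0)) (hqpos : ∀ x : ℝ, 0 < x → 0 < q x) :
    (∫⁻ u in Set.Ioi (0 : ℝ),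
      ENNReal.ofReal (q u * (1 + |Real.log (q u)|) * η (u, q u))) < ⊤ := by
  set c := q 1
  have hc : 0 < c := hqpos 1 one_pos
  have h_bound : ∀ u, 0 < u → q u * (1 + |log (q u)|) * η (u, q u) ≤
      min (K * (1 + q u + q u ^ 2) / u ^ 3) (K * (1 + q u + q u ^ 2) / q u ^ 3) := fun u hu =>
    mul_one_add_abs_log_mul_le hK.le hu (hqpos u hu) (hηbd u _ hu (hqpos u hu))
  refine setLIntegral_Ioi_zero_ofReal_lt_top (B := K * ((1 + c + c ^ 2) / c ^ 3))
    (M := K * (1 + c + c ^ 2)) (p := 3) (by norm_num) ?_ ?_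
  · rintro u ⟨hu, hu_le⟩
    have hcq : c ≤ q u := hq (mem_Ioi.2 hu) (mem_Ioi.2 one_pos) hu_le
    calc _ ≤ K * ((1 + q u + q u ^ 2) / q u ^ 3) := by
          rw [← mul_div_assoc]
          exact (h_bound u hu).trans (min_le_right _ _)
      _ ≤ K * ((1 + c + c ^ 2) / c ^ 3) := mul_le_mul_of_nonneg_left
          (antitoneOn_one_add_add_sq_div_pow_three hc (hc.trans_le hcq) hcq) hK.le
  · intro u (hu : 1 < u)
    have hu₀ : 0 < u := one_pos.trans hu
    have hqc : q u ≤ c := hq (mem_Ioi.2 one_pos) (mem_Ioi.2 hu₀) hu.le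
    have hq₀ := (hqpos u hu₀).le
    calc _ ≤ K * (1 + q u + q u ^ 2) / u ^ 3 := (h_bound u hu₀).trans (min_le_left _ _)
      _ ≤ K * (1 + c + c ^ 2) / u ^ 3 := by gcongr
      _ = K * (1 + c + c ^ 2) * u ^ (-3 : ℝ) := by
          rw [rpow_neg hu₀.le, ← rpow_natCast, div_eq_mul_inv]
          norm_num

/-- Finiteness of `∫_0^∞ q(u)(1+|log q(u)|) η(u, q(u)) du` for a density `η`
bounded by `K (x²+y²)^{-3/2}` and a non-increasing `q : (0,∞) → (0,∞)`. -/
theorem boundary_log_integral_finite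
    (K : ℝ) (hK : 0 < K) (η : ℝ × ℝ → ℝ) (hηmeas : Measurable η)
    (hηpos : ∀ x y : ℝ, 0 < x → 0 < y → 0 ≤ η (x, y))
    (hηbd : ∀ x y : ℝ, 0 < x → 0 < y → η (x, y) ≤ K * (x ^ 2 + y ^ 2) ^ (-(3 : ℝ) / 2))
    (q : ℝ → ℝ) (hq : AntitoneOn q (Set.Ioi 0)) (hqpos : ∀ x : ℝ, 0 < x → 0 < q x) :
    (∫⁻ u in Set.Ioi (0 : ℝ),
      ENNReal.ofReal (q u * (1 + |Real.log (q u)|) * η (u, q u))) < ⊤ :=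
  boundary_log_integral_finite_general K hK η hηbd q hq hqpos
end

section
/- Let a, â > 0, b, b̂ ∈ ℝ, γ ≠ 0, γ̂ ≠ 0 and c > 0 be real numbers, and let u ∈ ℝ be such that w := 1 + γ̂·(u − b̂)/â > 0. Define T̂(x) := â·(x^{γ̂} − 1)/γ̂ + b̂ for x > 0, and set y := T̂(c^{−1}·w^{1/γ̂}) (i.e., y is T̂ applied to the inverse of the map x ↦ T̂(c·x) evaluated at u). Then 1 + γ·(y − b)/a = 1 + γ·( c^{−γ̂}·(u − b)/a + ((c^{−γ̂} − 1)/γ̂)·(â/a − γ̂·(b̂ − b)/a) ). Consequently, if this quantity is positive, then (1 + γ·(y − b)/a)^{1/γ} = [1 + γ·( c^{−γ̂}·(u − b)/a + ((c^{−γ̂} − 1)/γ̂)·(â/a − γ̂·(b̂ − b)/a) )]^{1/γ}. -/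
/-! Since `(c⁻¹ w^{1/γ̂})^{γ̂} = c^{-γ̂} w` and `w` is affine in `u`, the point `y` is an affine
function of `u`; the identity is then a rearrangement of that affine expression. -/

lemma Real.inv_mul_rpow_one_div_rpow {c w γ : ℝ} (hc : 0 ≤ c) (hw : 0 ≤ w) (hγ : γ ≠ 0) :
    (c⁻¹ * w ^ (1 / γ)) ^ γ = c ^ (-γ) * w := by
  rw [Real.mul_rpow (inv_nonneg.mpr hc) (Real.rpow_nonneg hw _), ← Real.rpow_mul hw,
    one_div_mul_cancel hγ, Real.rpow_one, Real.inv_rpow hc, Real.rpow_neg hc]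

lemma gpd_sub_eq_of_scaled_standardization {a₁ b b₁ γ₁ s u : ℝ} (ha₁ : a₁ ≠ 0) (hγ₁ : γ₁ ≠ 0) :
    a₁ * (s * (1 + γ₁ * (u - b₁) / a₁) - 1) / γ₁ + b₁ - b =
      s * (u - b) + (s - 1) / γ₁ * (a₁ - γ₁ * (b₁ - b)) := by
  field_simp
  ring

theorem gpd_composition_representation_general
    (a a₁ b b₁ γ γ₁ c u : ℝ) (ha₁ : 0 < a₁)
    (hγ₁ : γ₁ ≠ 0) (hc : 0 < c)
    (w : ℝ) (hw : w = 1 + γ₁ * (u - b₁) / a₁) (hwpos : 0 < w)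
    (y : ℝ) (hy : y = a₁ * ((c⁻¹ * w ^ (1 / γ₁)) ^ γ₁ - 1) / γ₁ + b₁) :
    (1 + γ * (y - b) / a =
      1 + γ * (c ^ (-γ₁) * (u - b) / a +
        (c ^ (-γ₁) - 1) / γ₁ * (a₁ / a - γ₁ * (b₁ - b) / a))) ∧
    (0 < 1 + γ * (y - b) / a →
      (1 + γ * (y - b) / a) ^ (1 / γ) =
        (1 + γ * (c ^ (-γ₁) * (u - b) / a +
          (c ^ (-γ₁) - 1) / γ₁ * (a₁ / a - γ₁ * (b₁ - b) / a))) ^ (1 / γ)) := by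
  have hyb : y - b = c ^ (-γ₁) * (u - b) + (c ^ (-γ₁) - 1) / γ₁ * (a₁ - γ₁ * (b₁ - b)) := by
    rw [hy, Real.inv_mul_rpow_one_div_rpow hc.le hwpos.le hγ₁, hw,
      gpd_sub_eq_of_scaled_standardization ha₁.ne' hγ₁]
  have hrep : 1 + γ * (y - b) / a =
      1 + γ * (c ^ (-γ₁) * (u - b) / a +
        (c ^ (-γ₁) - 1) / γ₁ * (a₁ / a - γ₁ * (b₁ - b) / a)) := by
    rw [hyb]
    ring
  exact ⟨hrep, fun _ => by rw [hrep]⟩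

/-- Explicit representation of the composed map `T⁻¹ ∘ T̂ ∘ (T̂^{(c)})⁻¹` of
generalized Pareto location-scale transformations. Here `T̂(x) = a₁(x^{γ₁}-1)/γ₁ + b₁`,
`w = 1 + γ₁(u - b₁)/a₁ > 0`, and `y = T̂(c⁻¹ w^{1/γ₁})`. -/
theorem gpd_composition_representation
    (a a₁ b b₁ γ γ₁ c u : ℝ) (ha : 0 < a) (ha₁ : 0 < a₁)
    (hγ : γ ≠ 0) (hγ₁ : γ₁ ≠ 0) (hc : 0 < c)
    (w : ℝ) (hw : w = 1 + γ₁ * (u - b₁) / a₁) (hwpos : 0 < w)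
    (y : ℝ) (hy : y = a₁ * ((c⁻¹ * w ^ (1 / γ₁)) ^ γ₁ - 1) / γ₁ + b₁) :
    (1 + γ * (y - b) / a =
      1 + γ * (c ^ (-γ₁) * (u - b) / a +
        (c ^ (-γ₁) - 1) / γ₁ * (a₁ / a - γ₁ * (b₁ - b) / a))) ∧
    (0 < 1 + γ * (y - b) / a →
      (1 + γ * (y - b) / a) ^ (1 / γ) =
        (1 + γ * (c ^ (-γ₁) * (u - b) / a +
          (c ^ (-γ₁) - 1) / γ₁ * (a₁ / a - γ₁ * (b₁ - b) / a))) ^ (1 / γ)) :=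
  gpd_composition_representation_general a a₁ b b₁ γ γ₁ c u ha₁ hγ₁ hc w hw hwpos y hy
end

section
/- Let K > 0 and let η : (0,∞)² → [0,∞) be measurable with η(x,y) ≤ K·(x²+y²)^{−3/2} for all x,y > 0; let ν be the Borel measure on (0,∞)² with density η with respect to Lebesgue measure. Let q : (0,∞) → (0,∞] be non-increasing, and set S := {(x,y) ∈ (0,∞)² : q(x) < ∞ and y ≥ q(x)}, x_l := inf{x > 0 : q(x) < ∞}, q(∞) := inf_{x>0} q(x), q⟵(v) := inf{x > 0 : q(x) ≤ v} (with inf ∅ := ∞), and q(u−) := inf_{0<x<u} q(x) for u > 0. Then for every u > x_l and every v > q(∞) with q⟵(v) > 0: ν( S \ ([u,∞) × [v,∞)) ) ≤ (K/2)·( (u − x_l)/q(u−)² + (v − q(∞))/q⟵(v)² ). -/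
open MeasureTheory Set ENNReal

/-!
The part of `S` left over after truncation lies in two half-infinite strips: points with
`x < u` satisfy `x_l ≤ x` and `y ≥ q(x) ≥ q(u-)`, while points with `x ≥ u` have `y < v`, hence
`q(x) ≤ v`, so `x ≥ q⟵(v)`, and `y ≥ q(x) ≥ q(∞)`. On `[x_l, u) × [q(u-), ∞)` the density is
at most `K y⁻³`, whose integral in `y` is `K / (2 q(u-)²)`; symmetrically on
`[q⟵(v), ∞) × [q(∞), v)`.
-/

noncomputable section

-- For antitone `q` these are the paper's `S`, `x_l`, `q(u-)`, `q(∞)` and `q⟵(v)`.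
def failureSet (q : ℝ → ℝ≥0∞) : Set (ℝ × ℝ) :=
  {p | 0 < p.1 ∧ 0 < p.2 ∧ q p.1 ≠ ⊤ ∧ q p.1 ≤ ENNReal.ofReal p.2}

def finiteLeftEnd (q : ℝ → ℝ≥0∞) : ℝ := sInf {x : ℝ | 0 < x ∧ q x ≠ ⊤}

def leftLimit (q : ℝ → ℝ≥0∞) (u : ℝ) : ℝ≥0∞ := ⨅ x ∈ Ioo (0 : ℝ) u, q x

def limitAtTop (q : ℝ → ℝ≥0∞) : ℝ≥0∞ := ⨅ x ∈ Ioi (0 : ℝ), q x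

def genInverse (q : ℝ → ℝ≥0∞) (v : ℝ) : ℝ≥0∞ :=
  ⨅ x ∈ {x : ℝ | 0 < x ∧ q x ≤ ENNReal.ofReal v}, ENNReal.ofReal x

end

section FailureCurve

variable {q : ℝ → ℝ≥0∞}

lemma finiteLeftEnd_nonneg : 0 ≤ finiteLeftEnd q :=
  Real.sInf_nonneg fun _ hx ↦ hx.1.le

lemma exists_lt_of_limitAtTop_lt {a : ℝ≥0∞} (h : limitAtTop q < a) : ∃ x, 0 < x ∧ q x < a := by
  simpa only [limitAtTop, iInf_lt_iff, exists_prop, mem_Ioi] using h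

lemma leftLimit_ne_top {u : ℝ} (hne : {x : ℝ | 0 < x ∧ q x ≠ ⊤}.Nonempty)
    (hu : finiteLeftEnd q < u) : leftLimit q u ≠ ⊤ := by
  obtain ⟨x, ⟨hx, hqx⟩, hxu⟩ := (csInf_lt_iff ⟨0, fun _ hy ↦ hy.1.le⟩ hne).1 hu
  exact ne_top_of_le_ne_top hqx (iInf₂_le x ⟨hx, hxu⟩)

lemma leftLimit_pos (hq : AntitoneOn q (Ioi 0)) (hqpos : ∀ x : ℝ, 0 < x → 0 < q x) {u : ℝ}
    (hu : 0 < u) : 0 < leftLimit q u :=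
  (hqpos u hu).trans_le <| le_iInf₂ fun _ hx ↦ hq hx.1 hu hx.2.le

lemma genInverse_ne_top {v : ℝ} (h : limitAtTop q < ENNReal.ofReal v) : genInverse q v ≠ ⊤ := by
  obtain ⟨x, hx, hqx⟩ := exists_lt_of_limitAtTop_lt h
  exact ne_top_of_le_ne_top ofReal_ne_top (iInf₂_le x ⟨hx, hqx.le⟩)

theorem failureSet_diff_subset (u v : ℝ) :
    failureSet q \ {p | u ≤ p.1 ∧ v ≤ p.2} ⊆
      (Ioi 0 ∩ Ico (finiteLeftEnd q) u) ×ˢ Ici (leftLimit q u).toReal ∪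
        Ici (genInverse q v).toReal ×ˢ (Ioi 0 ∩ Ico (limitAtTop q).toReal v) := by
  rintro ⟨x, y⟩ ⟨⟨hx, hy, hqx, hqxy⟩, hnot⟩
  by_cases hxu : x < u
  · refine .inl ⟨⟨hx, csInf_le ⟨0, fun _ hz ↦ hz.1.le⟩ ⟨hx, hqx⟩, hxu⟩, ?_⟩
    exact toReal_le_of_le_ofReal hy.le ((iInf₂_le x ⟨hx, hxu⟩).trans hqxy)
  · have hyv : y < v := not_le.1 fun hvy ↦ hnot ⟨not_lt.1 hxu, hvy⟩
    refine .inr ⟨?_, hy, ?_, hyv⟩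
    · exact toReal_le_of_le_ofReal hx.le
        (iInf₂_le x ⟨hx, hqxy.trans (ofReal_le_ofReal hyv.le)⟩)
    · exact toReal_le_of_le_ofReal hy.le ((iInf₂_le x hx).trans hqxy)

end FailureCurve

lemma lintegral_Ici_rpow_of_lt {a c : ℝ} (ha : a < -1) (hc : 0 < c) :
    ∫⁻ y in Ici c, ENNReal.ofReal (y ^ a) = ENNReal.ofReal (-c ^ (a + 1) / (a + 1)) := by
  rw [← restrict_Ioi_eq_restrict_Ici, ← integral_Ioi_rpow_of_lt ha hc,
    ofReal_integral_eq_lintegral_ofReal (integrableOn_Ioi_rpow_of_lt ha hc)]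
  filter_upwards [ae_restrict_mem measurableSet_Ioi] with y hy
  exact Real.rpow_nonneg (hc.trans hy).le a

lemma lintegral_Ici_mul_rpow_neg_three {K c : ℝ} (hK : 0 ≤ K) (hc : 0 < c) :
    ∫⁻ y in Ici c, ENNReal.ofReal (K * y ^ (-3 : ℝ)) =
      ENNReal.ofReal (K / 2) / ENNReal.ofReal c ^ 2 := by
  simp_rw [ofReal_mul hK]
  rw [lintegral_const_mul' _ _ ofReal_ne_top, lintegral_Ici_rpow_of_lt (by norm_num) hc,
    ← ofReal_mul hK, ← ofReal_pow hc.le, ← ofReal_div_of_pos (by positivity)]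
  congr 1
  rw [show (-3 : ℝ) + 1 = -2 by norm_num, Real.rpow_neg hc.le, Real.rpow_two]
  field_simp

lemma rpow_sq_add_sq_le_rpow_neg_three (x : ℝ) {y : ℝ} (hy : 0 < y) :
    (x ^ 2 + y ^ 2) ^ (-(3 : ℝ) / 2) ≤ y ^ (-3 : ℝ) := by
  calc (x ^ 2 + y ^ 2) ^ (-(3 : ℝ) / 2) ≤ (y ^ 2) ^ (-(3 : ℝ) / 2) :=
        Real.rpow_le_rpow_of_nonpos (by positivity) (by nlinarith) (by norm_num)
    _ = y ^ (-3 : ℝ) := by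
        rw [← Real.rpow_natCast y 2, ← Real.rpow_mul hy.le]
        norm_num

section Strips

variable {K c : ℝ} {g : ℝ × ℝ → ℝ}

lemma setLIntegral_prod_Ici_le (hK : 0 ≤ K) (hc : 0 < c)
    (hg : ∀ x y : ℝ, 0 < x → 0 < y → g (x, y) ≤ K * (x ^ 2 + y ^ 2) ^ (-(3 : ℝ) / 2))
    {s : Set ℝ} (hs : s ⊆ Ioi 0) :
    ∫⁻ p in s ×ˢ Ici c, ENNReal.ofReal (g p) ≤
      ENNReal.ofReal (K / 2) * (volume s / ENNReal.ofReal c ^ 2) := by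
  have hdom : ∀ p ∈ s ×ˢ Ici c, g p ≤ K * p.2 ^ (-3 : ℝ) := fun p ⟨hx, hy⟩ ↦
    (hg _ _ (hs hx) (hc.trans_le hy)).trans <|
      mul_le_mul_of_nonneg_left (rpow_sq_add_sq_le_rpow_neg_three _ (hc.trans_le hy)) hK
  calc ∫⁻ p in s ×ˢ Ici c, ENNReal.ofReal (g p)
      ≤ ∫⁻ p in s ×ˢ Ici c, ENNReal.ofReal (K * p.2 ^ (-3 : ℝ)) :=
        setLIntegral_mono (by fun_prop) fun p hp ↦ ofReal_le_ofReal (hdom p hp)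
    _ = ∫⁻ _ in s, ENNReal.ofReal (K / 2) / ENNReal.ofReal c ^ 2 := by
        rw [Measure.volume_eq_prod, setLIntegral_prod _ (by fun_prop)]
        simp_rw [lintegral_Ici_mul_rpow_neg_three hK hc]
    _ = _ := by rw [setLIntegral_const]; simp only [div_eq_mul_inv]; ring

lemma setLIntegral_Ici_prod_le (hK : 0 ≤ K) (hc : 0 < c)
    (hg : ∀ x y : ℝ, 0 < x → 0 < y → g (x, y) ≤ K * (x ^ 2 + y ^ 2) ^ (-(3 : ℝ) / 2))
    {t : Set ℝ} (ht : t ⊆ Ioi 0) :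
    ∫⁻ p in Ici c ×ˢ t, ENNReal.ofReal (g p) ≤
      ENNReal.ofReal (K / 2) * (volume t / ENNReal.ofReal c ^ 2) := by
  have hdom : ∀ p ∈ Ici c ×ˢ t, g p ≤ K * p.1 ^ (-3 : ℝ) := fun p ⟨hx, hy⟩ ↦
    (hg _ _ (hc.trans_le hx) (ht hy)).trans <| mul_le_mul_of_nonneg_left
      (add_comm (p.1 ^ 2) _ ▸ rpow_sq_add_sq_le_rpow_neg_three _ (hc.trans_le hx)) hK
  calc ∫⁻ p in Ici c ×ˢ t, ENNReal.ofReal (g p)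
      ≤ ∫⁻ p in Ici c ×ˢ t, ENNReal.ofReal (K * p.1 ^ (-3 : ℝ)) :=
        setLIntegral_mono (by fun_prop) fun p hp ↦ ofReal_le_ofReal (hdom p hp)
    _ = ∫⁻ _ in t, ENNReal.ofReal (K / 2) / ENNReal.ofReal c ^ 2 := by
        rw [Measure.volume_eq_prod, setLIntegral_prod_symm _ (by fun_prop)]
        simp_rw [lintegral_Ici_mul_rpow_neg_three hK hc]
    _ = _ := by rw [setLIntegral_const]; simp only [div_eq_mul_inv]; ring

end Strips

theorem truncated_failure_set_bound_general
    (K : ℝ) (hK : 0 < K) (η : ℝ × ℝ → ℝ)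
    (hηbd : ∀ x y : ℝ, 0 < x → 0 < y → η (x, y) ≤ K * (x ^ 2 + y ^ 2) ^ (-(3 : ℝ) / 2))
    (q : ℝ → ℝ≥0∞) (hq : AntitoneOn q (Set.Ioi 0)) (hqpos : ∀ x : ℝ, 0 < x → 0 < q x) :
    ∀ u v : ℝ,
      sInf {x : ℝ | 0 < x ∧ q x ≠ ⊤} < u →
      (⨅ x ∈ Set.Ioi (0 : ℝ), q x) < ENNReal.ofReal v →
      (0 : ℝ≥0∞) < (⨅ x ∈ {x : ℝ | 0 < x ∧ q x ≤ ENNReal.ofReal v}, ENNReal.ofReal x) →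
      (∫⁻ p in {p : ℝ × ℝ | 0 < p.1 ∧ 0 < p.2 ∧ q p.1 ≠ ⊤ ∧ q p.1 ≤ ENNReal.ofReal p.2} \
          {p : ℝ × ℝ | u ≤ p.1 ∧ v ≤ p.2}, ENNReal.ofReal (η p)) ≤
        ENNReal.ofReal (K / 2) *
          (ENNReal.ofReal (u - sInf {x : ℝ | 0 < x ∧ q x ≠ ⊤}) /
              (⨅ x ∈ Set.Ioo (0 : ℝ) u, q x) ^ 2 +
            (ENNReal.ofReal v - ⨅ x ∈ Set.Ioi (0 : ℝ), q x) /
              (⨅ x ∈ {x : ℝ | 0 < x ∧ q x ≤ ENNReal.ofReal v}, ENNReal.ofReal x) ^ 2) := by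
  intro u v (hu : finiteLeftEnd q < u) (hv : limitAtTop q < ENNReal.ofReal v)
    (hd : 0 < genInverse q v)
  obtain ⟨x₀, hx₀, hqx₀⟩ := exists_lt_of_limitAtTop_lt hv
  have hc_top := leftLimit_ne_top ⟨x₀, hx₀, hqx₀.ne_top⟩ hu
  have hc_pos := leftLimit_pos hq hqpos (finiteLeftEnd_nonneg.trans_lt hu)
  have hd_top := genInverse_ne_top hv
  have hvol_left : volume (Ioi 0 ∩ Ico (finiteLeftEnd q) u) ≤
      ENNReal.ofReal (u - finiteLeftEnd q) :=
    (measure_mono inter_subset_right).trans_eq (Real.volume_Ico ..)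
  have hvol_right : volume (Ioi 0 ∩ Ico (limitAtTop q).toReal v) ≤
      ENNReal.ofReal v - limitAtTop q := by
    refine (measure_mono inter_subset_right).trans_eq ?_
    rw [Real.volume_Ico, ofReal_sub _ toReal_nonneg, ofReal_toReal hv.ne_top]
  calc ∫⁻ p in failureSet q \ {p | u ≤ p.1 ∧ v ≤ p.2}, ENNReal.ofReal (η p)
      ≤ ∫⁻ p in (Ioi 0 ∩ Ico (finiteLeftEnd q) u) ×ˢ Ici (leftLimit q u).toReal ∪
          Ici (genInverse q v).toReal ×ˢ (Ioi 0 ∩ Ico (limitAtTop q).toReal v),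
          ENNReal.ofReal (η p) := lintegral_mono_set (failureSet_diff_subset u v)
    _ ≤ _ := lintegral_union_le _ _ _
    _ ≤ ENNReal.ofReal (K / 2) * (ENNReal.ofReal (u - finiteLeftEnd q) / leftLimit q u ^ 2) +
        ENNReal.ofReal (K / 2) * ((ENNReal.ofReal v - limitAtTop q) / genInverse q v ^ 2) := by
      gcongr
      · refine (setLIntegral_prod_Ici_le hK.le (toReal_pos hc_pos.ne' hc_top) hηbd
          inter_subset_left).trans ?_
        rw [ofReal_toReal hc_top]
        gcongr
      · refine (setLIntegral_Ici_prod_le hK.le (toReal_pos hd.ne' hd_top) hηbd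
          inter_subset_left).trans ?_
        rw [ofReal_toReal hd_top]
        gcongr
    _ = _ := (mul_add ..).symm

/-- Quantitative bound on the exponent measure of the part of the failure set
`S = {(x,y) : q(x) < ∞, y ≥ q(x)}` removed by truncation away from the axes:
`ν(S \ ([u,∞)×[v,∞))) ≤ (K/2)((u-x_l)/q(u-)² + (v-q(∞))/q⟵(v)²)`. -/
theorem truncated_failure_set_bound
    (K : ℝ) (hK : 0 < K) (η : ℝ × ℝ → ℝ) (hηmeas : Measurable η)
    (hηpos : ∀ x y : ℝ, 0 < x → 0 < y → 0 ≤ η (x, y))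
    (hηbd : ∀ x y : ℝ, 0 < x → 0 < y → η (x, y) ≤ K * (x ^ 2 + y ^ 2) ^ (-(3 : ℝ) / 2))
    (q : ℝ → ℝ≥0∞) (hq : AntitoneOn q (Set.Ioi 0)) (hqpos : ∀ x : ℝ, 0 < x → 0 < q x)
    (hfin : ∃ x : ℝ, 0 < x ∧ q x ≠ ⊤) :
    ∀ u v : ℝ,
      sInf {x : ℝ | 0 < x ∧ q x ≠ ⊤} < u →
      (⨅ x ∈ Set.Ioi (0 : ℝ), q x) < ENNReal.ofReal v →
      (0 : ℝ≥0∞) < (⨅ x ∈ {x : ℝ | 0 < x ∧ q x ≤ ENNReal.ofReal v}, ENNReal.ofReal x) →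
      (∫⁻ p in {p : ℝ × ℝ | 0 < p.1 ∧ 0 < p.2 ∧ q p.1 ≠ ⊤ ∧ q p.1 ≤ ENNReal.ofReal p.2} \
          {p : ℝ × ℝ | u ≤ p.1 ∧ v ≤ p.2}, ENNReal.ofReal (η p)) ≤
        ENNReal.ofReal (K / 2) *
          (ENNReal.ofReal (u - sInf {x : ℝ | 0 < x ∧ q x ≠ ⊤}) /
              (⨅ x ∈ Set.Ioo (0 : ℝ) u, q x) ^ 2 +
            (ENNReal.ofReal v - ⨅ x ∈ Set.Ioi (0 : ℝ), q x) /
              (⨅ x ∈ {x : ℝ | 0 < x ∧ q x ≤ ENNReal.ofReal v}, ENNReal.ofReal x) ^ 2) :=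
  truncated_failure_set_bound_general K hK η hηbd q hq hqpos
end

section
/- Let γ > 1 and let q : (0,∞) → (0,∞) be non-increasing such that x^{(1−γ)/2}·|log x| = O(q(x)) as x ↓ 0, i.e., there exist C > 0 and δ ∈ (0,1) with q(x) ≥ C·x^{(1−γ)/2}·|log x| for all x ∈ (0,δ). Define q⟵(v) := inf{x > 0 : q(x) ≤ v}. Then (v/log v)^{2/(1−γ)} = O(q⟵(v)) as v → ∞, i.e., there exist C' > 0 and v₀ > 1 with q⟵(v) ≥ C'·(v/log v)^{2/(1−γ)} for all v ≥ v₀. Consequently, ∫_{y₀}^∞ (q⟵(v))^{1−γ}·v^{−3} dv < ∞ for every y₀ > 1. -/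
/-!
Put `p = (1 - γ) / 2 < 0` and `t(v) = c (v / log v) ^ (1 / p)`. Then
`C t(v) ^ p = C c ^ p v / log v` and `-log t(v) ≥ -(log v) / (2p)`, so `C t(v) ^ p |log t(v)| ≥ v`
once `c` is small. Since `x ↦ x ^ p |log x|` decreases on `(0, 1)` and `t(v) → 0`, (Q2) gives
`q > v` on `(0, t(v))` for large `v`, i.e. `q⟵(v) ≥ t(v)`. Hence
`q⟵(v) ^ (1 - γ) v ^ (-3) ≤ c ^ (1 - γ) / (v log² v)`, which is integrable at infinity, while on a
bounded range the integrand is bounded because `q⟵` is bounded below there.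
-/

open MeasureTheory Set Filter Topology Real
open scoped ENNReal

lemma log_le_half_self {x : ℝ} (hx : 0 < x) : log x ≤ x / 2 := by
  have h := log_le_sub_one_of_pos (half_pos hx)
  rw [log_div hx.ne' two_ne_zero] at h
  linarith [log_two_lt_d9]

lemma tendsto_div_log_atTop : Tendsto (fun x : ℝ => x / log x) atTop atTop := by
  have h : Tendsto (fun x : ℝ => log x / x) atTop (𝓝[>] 0) := by
    refine tendsto_nhdsWithin_iff.2
      ⟨by simpa using tendsto_pow_log_div_mul_add_atTop 1 0 1 one_ne_zero, ?_⟩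
    filter_upwards [eventually_gt_atTop 1] with x hx
    exact div_pos (log_pos hx) (by linarith)
  convert h.inv_tendsto_nhdsGT_zero using 1
  ext x
  simp

lemma rpow_mul_neg_log_lt_of_lt {p x t : ℝ} (hp : p ≤ 0) (hx : 0 < x) (hxt : x < t) (ht : t < 1) :
    t ^ p * -log t < x ^ p * -log x := by
  have hlog : -log t < -log x := neg_lt_neg (log_lt_log hx hxt)
  calc t ^ p * -log t < t ^ p * -log x := by gcongr; exact rpow_pos_of_pos (hx.trans hxt) p
    _ ≤ x ^ p * -log x := mul_le_mul_of_nonneg_right (rpow_le_rpow_of_nonpos hx hxt.le hp)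
      (by linarith [log_neg (hx.trans hxt) ht])

lemma le_mul_rpow_mul_neg_log {p C c v : ℝ} (hp : p < 0) (hc : 0 < c) (hc₁ : c ≤ 1)
    (hcC : -2 * p ≤ C * c ^ p) (hv : 1 < v) :
    v ≤ C * (c * (v / log v) ^ p⁻¹) ^ p * -log (c * (v / log v) ^ p⁻¹) := by
  have hL : 0 < log v := log_pos hv
  have hu : 0 < v / log v := div_pos (by linarith) hL
  have hp' : 0 < -p⁻¹ := neg_pos.2 (inv_lt_zero.2 hp)
  have hCc : 0 ≤ C * c ^ p := by linarith
  have hpow : (c * (v / log v) ^ p⁻¹) ^ p = c ^ p * (v / log v) := by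
    rw [mul_rpow hc.le (rpow_nonneg hu.le _), ← rpow_mul hu.le, inv_mul_cancel₀ hp.ne, rpow_one]
  have hlog : -p⁻¹ * (log v / 2) ≤ -log (c * (v / log v) ^ p⁻¹) := by
    rw [log_mul hc.ne' (rpow_pos_of_pos hu _).ne', log_rpow hu, log_div (by linarith) hL.ne']
    have := log_le_half_self hL
    have := log_nonpos hc.le hc₁
    nlinarith
  calc v = (-2 * p) * (-p⁻¹ * (log v / 2)) * (v / log v) := by
        field_simp
        rw [div_self hp.ne]
    _ ≤ (C * c ^ p) * (-p⁻¹ * (log v / 2)) * (v / log v) := by gcongr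
    _ ≤ (C * c ^ p) * -log (c * (v / log v) ^ p⁻¹) * (v / log v) := by gcongr
    _ = _ := by rw [hpow]; ring

lemma exists_pos_forall_eventually_mul_div_log_rpow_le {q : ℝ → ℝ} {p C δ : ℝ} (hp : p < 0)
    (hC : 0 < C) (hδ : 0 < δ) (hq : ∀ x ∈ Ioo 0 δ, C * x ^ p * |log x| ≤ q x) :
    ∃ c > 0, ∀ᶠ v in atTop, ∀ x, 0 < x → q x ≤ v → c * (v / log v) ^ p⁻¹ ≤ x := by
  obtain ⟨c, hc, hc₁, hcC⟩ : ∃ c > 0, c ≤ 1 ∧ -2 * p ≤ C * c ^ p := by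
    have hpow :=
      ((tendsto_rpow_neg_nhdsGT_zero hp).const_mul_atTop hC).eventually_ge_atTop (-2 * p)
    have hc : ∀ᶠ c in 𝓝[>] 0, c ∈ Ioo (0 : ℝ) 1 := Ioo_mem_nhdsGT one_pos
    obtain ⟨c, hcC, hc⟩ := (hpow.and hc).exists
    exact ⟨c, hc.1, hc.2.le, hcC⟩
  have ht : Tendsto (fun v => c * (v / log v) ^ p⁻¹) atTop (𝓝 0) := by
    simpa using ((tendsto_rpow_neg_atTop (neg_pos.2 (inv_lt_zero.2 hp))).comp
      tendsto_div_log_atTop).const_mul c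
  refine ⟨c, hc, ?_⟩
  filter_upwards [ht.eventually_lt_const hδ, ht.eventually_lt_const one_pos,
    eventually_gt_atTop 1] with v htδ ht₁ hv x hx hqx
  by_contra! hxt
  have hx₁ : x < 1 := hxt.trans ht₁
  have := hq x ⟨hx, hxt.trans htδ⟩
  rw [abs_of_neg (log_neg hx hx₁), mul_assoc] at this
  have := le_mul_rpow_mul_neg_log hp hc hc₁ hcC hv
  have := mul_lt_mul_of_pos_left (rpow_mul_neg_log_lt_of_lt hp.le hx hxt ht₁) hC
  linarith

lemma rpow_sInf_le_rpow_of_forall_le {s : Set ℝ} {t e : ℝ} (he : e < 0) (ht : 0 < t)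
    (hs : ∀ x ∈ s, t ≤ x) : sInf s ^ e ≤ t ^ e := by
  rcases s.eq_empty_or_nonempty with rfl | hne
  · rw [Real.sInf_empty, zero_rpow he.ne]
    positivity
  · exact rpow_le_rpow_of_nonpos ht (le_csInf hne hs) he.le

lemma setLIntegral_Ioi_lt_top_of_le {f : ℝ → ℝ≥0∞} {g : ℝ → ℝ} {a b : ℝ} {M : ℝ≥0∞}
    (hM : M ≠ ⊤) (hfM : ∀ v ∈ Ioc a b, f v ≤ M) (hg : IntegrableOn g (Ioi b))
    (hfg : ∀ v ∈ Ioi b, f v ≤ ENNReal.ofReal (g v)) : ∫⁻ v in Ioi a, f v < ⊤ := by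
  have hsub : Ioi a ⊆ Ioc a b ∪ Ioi b := fun v hv => by
    rcases le_or_gt v b with h | h
    exacts [Or.inl ⟨hv, h⟩, Or.inr h]
  calc ∫⁻ v in Ioi a, f v ≤ ∫⁻ v in Ioc a b ∪ Ioi b, f v := lintegral_mono_set hsub
    _ ≤ (∫⁻ v in Ioc a b, f v) + ∫⁻ v in Ioi b, f v := lintegral_union_le _ _ _
    _ ≤ (∫⁻ _ in Ioc a b, M) + ∫⁻ v in Ioi b, ENNReal.ofReal (g v) :=
      add_le_add (setLIntegral_mono' measurableSet_Ioc hfM)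
        (setLIntegral_mono' measurableSet_Ioi hfg)
    _ < ⊤ := by
      rw [setLIntegral_const]
      exact ENNReal.add_lt_top.2 ⟨ENNReal.mul_lt_top hM.lt_top measure_Ioc_lt_top,
        hg.lintegral_lt_top⟩

lemma lintegral_rpow_sInf_mul_rpow_neg_three_lt_top {q : ℝ → ℝ} {e c v₀ y₀ : ℝ} (he : e < 0)
    (hc : 0 < c) (hv₀ : 1 < v₀) (hy₀ : 0 < y₀)
    (hbound : ∀ v, v₀ ≤ v → ∀ x, 0 < x → q x ≤ v → c * (v / log v) ^ (2 / e) ≤ x) :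
    ∫⁻ v in Ioi y₀, ENNReal.ofReal (sInf {x | 0 < x ∧ q x ≤ v} ^ e * v ^ (-(3 : ℝ))) < ⊤ := by
  have hpos : ∀ v, 1 < v → 0 < c * (v / log v) ^ (2 / e) := fun v hv =>
    mul_pos hc (rpow_pos_of_pos (div_pos (by linarith) (log_pos hv)) _)
  set v₁ := max v₀ y₀
  have hv₁ : 1 < v₁ := hv₀.trans_le (le_max_left _ _)
  refine setLIntegral_Ioi_lt_top_of_le
    (M := ENNReal.ofReal ((c * (v₁ / log v₁) ^ (2 / e)) ^ e * y₀ ^ (-(3 : ℝ))))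
    ENNReal.ofReal_ne_top (fun v hv => ?_)
    ((integrableOn_inv_div_log_sq_Ioi hv₁).const_mul (c ^ e)) (fun v hv => ?_)
  · have hinf := rpow_sInf_le_rpow_of_forall_le he (hpos v₁ hv₁)
      fun x (hx : x ∈ {x | 0 < x ∧ q x ≤ v}) => hbound v₁ (le_max_left _ _) x hx.1 (hx.2.trans hv.2)
    exact ENNReal.ofReal_le_ofReal <| mul_le_mul hinf
      (rpow_le_rpow_of_nonpos hy₀ hv.1.le (by norm_num)) (rpow_nonneg (hy₀.trans hv.1).le _)
      (rpow_nonneg (hpos v₁ hv₁).le _)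
  · have hv : v₁ < v := hv
    have hv1 : 1 < v := hv₁.trans hv
    have hv0 : 0 < v := by linarith
    have hu : 0 < v / log v := div_pos hv0 (log_pos hv1)
    have hpow : (c * (v / log v) ^ (2 / e)) ^ e = c ^ e * (v / log v) ^ (2 : ℕ) := by
      rw [mul_rpow hc.le (rpow_nonneg hu.le _), ← rpow_mul hu.le, div_mul_cancel₀ _ he.ne,
        rpow_two]
    refine ENNReal.ofReal_le_ofReal ?_
    calc sInf {x | 0 < x ∧ q x ≤ v} ^ e * v ^ (-(3 : ℝ))
        ≤ (c * (v / log v) ^ (2 / e)) ^ e * v ^ (-(3 : ℝ)) :=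
          mul_le_mul_of_nonneg_right (rpow_sInf_le_rpow_of_forall_le he (hpos v hv1) fun x hx =>
            hbound v ((le_max_left _ _).trans hv.le) x hx.1 hx.2) (rpow_nonneg hv0.le _)
      _ = c ^ e * (v⁻¹ / log v ^ 2) := by
          rw [hpow, rpow_neg hv0.le, show (3 : ℝ) = (3 : ℕ) by norm_num, rpow_natCast]
          field_simp

theorem generalized_inverse_lower_bound_general
    (γ : ℝ) (hγ : 1 < γ)
    (q : ℝ → ℝ)
    (hQ2 : ∃ C : ℝ, 0 < C ∧ ∃ δ ∈ Set.Ioo (0 : ℝ) 1, ∀ x ∈ Set.Ioo (0 : ℝ) δ,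
      C * x ^ ((1 - γ) / 2) * |Real.log x| ≤ q x) :
    (∃ C' : ℝ, 0 < C' ∧ ∃ v₀ : ℝ, 1 < v₀ ∧ ∀ v : ℝ, v₀ ≤ v →
      C' * (v / Real.log v) ^ (2 / (1 - γ)) ≤ sInf {x : ℝ | 0 < x ∧ q x ≤ v}) ∧
    ∀ y₀ : ℝ, 1 < y₀ →
      (∫⁻ v in Set.Ioi y₀,
        ENNReal.ofReal ((sInf {x : ℝ | 0 < x ∧ q x ≤ v}) ^ (1 - γ) * v ^ (-(3 : ℝ)))) < ⊤ := by
  obtain ⟨C, hC, δ, hδ, hq⟩ := hQ2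
  obtain ⟨c, hc, hbound⟩ :=
    exists_pos_forall_eventually_mul_div_log_rpow_le (by linarith : (1 - γ) / 2 < 0) hC hδ.1 hq
  rw [inv_div] at hbound
  obtain ⟨v₀, hv₀⟩ := eventually_atTop.1 (hbound.and (eventually_ge_atTop (q 1)))
  have hv₁ : ∀ v, max v₀ 2 ≤ v →
      (∀ x, 0 < x → q x ≤ v → c * (v / log v) ^ (2 / (1 - γ)) ≤ x) ∧ q 1 ≤ v :=
    fun v hv => hv₀ v ((le_max_left _ _).trans hv)
  refine ⟨⟨c, hc, max v₀ 2, lt_max_of_lt_right one_lt_two, fun v hv => ?_⟩, fun y₀ hy₀ => ?_⟩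
  · exact le_csInf ⟨1, one_pos, (hv₁ v hv).2⟩ fun x hx => (hv₁ v hv).1 x hx.1 hx.2
  · exact lintegral_rpow_sInf_mul_rpow_neg_three_lt_top (by linarith) hc
      (lt_max_of_lt_right one_lt_two) (by linarith) fun v hv => (hv₁ v hv).1

/-- If `γ > 1` and the non-increasing boundary function `q` satisfies
`q(x) ≥ C x^{(1-γ)/2}|log x|` near `0`, then the generalized inverse satisfies
`q⟵(v) ≥ C'(v/log v)^{2/(1-γ)}` for large `v`, and consequently
`∫_{y₀}^∞ (q⟵(v))^{1-γ} v^{-3} dv < ∞` for every `y₀ > 1`. -/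
theorem generalized_inverse_lower_bound
    (γ : ℝ) (hγ : 1 < γ)
    (q : ℝ → ℝ) (hq : AntitoneOn q (Set.Ioi 0)) (hqpos : ∀ x : ℝ, 0 < x → 0 < q x)
    (hQ2 : ∃ C : ℝ, 0 < C ∧ ∃ δ ∈ Set.Ioo (0 : ℝ) 1, ∀ x ∈ Set.Ioo (0 : ℝ) δ,
      C * x ^ ((1 - γ) / 2) * |Real.log x| ≤ q x) :
    (∃ C' : ℝ, 0 < C' ∧ ∃ v₀ : ℝ, 1 < v₀ ∧ ∀ v : ℝ, v₀ ≤ v →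
      C' * (v / Real.log v) ^ (2 / (1 - γ)) ≤ sInf {x : ℝ | 0 < x ∧ q x ≤ v}) ∧
    ∀ y₀ : ℝ, 1 < y₀ →
      (∫⁻ v in Set.Ioi y₀,
        ENNReal.ofReal ((sInf {x : ℝ | 0 < x ∧ q x ≤ v}) ^ (1 - γ) * v ^ (-(3 : ℝ)))) < ⊤ :=
  generalized_inverse_lower_bound_general γ hγ q hQ2
end

section
/- Let K > 0, let η : (0,∞)² → [0,∞) be continuous with η(x,y) ≤ K·(x²+y²)^{−3/2} for all x, y > 0, and let q : (0,∞) → (0,∞) be non-increasing. Then lim_{ℓ ↓ 0} (1/(2ℓ))·∫_0^∞ ( ∫_{(1−ℓ)·q(u)}^{(1+ℓ)·q(u)} η(u,v) dv ) du = ∫_0^∞ q(u)·η(u, q(u)) du, and both sides are finite. -/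
/-!
For fixed `u > 0` the inner average `(2ℓ)⁻¹ ∫_{(1-ℓ)q(u)}^{(1+ℓ)q(u)} η(u,v) dv` tends to
`q(u) η(u,q(u))` by continuity of `η(u, ·)` at `q(u)`. For `ℓ ≤ 1/2` the window stays above
`q(u)/2`, so the kernel bound dominates the average by `8K q(u) (u² + q(u)²)^{-3/2}`; since `q`
is non-increasing this is at most `8K q(1)^{-2}` on `(0,1]` and `8K q(1) u^{-3}` on `(1,∞)`,
hence integrable, and dominated convergence gives the limit. Monotonicity of `q` also makes the
inner averages a.e.-measurable in `u`.
-/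

open MeasureTheory Set Filter Topology
open scoped ENNReal

theorem tendsto_inv_mul_setIntegral_Ioo {f : ℝ → ℝ} {c : ℝ} (hc : 0 < c)
    (hf : ContinuousOn f (Ioi 0)) :
    Tendsto (fun ℓ : ℝ => (2 * ℓ)⁻¹ * ∫ v in Ioo ((1 - ℓ) * c) ((1 + ℓ) * c), f v)
      (𝓝[>] 0) (𝓝 (c * f c)) := by
  have hend (s : ℝ) : Tendsto (fun ℓ : ℝ => (1 + s * ℓ) * c) (𝓝[>] 0) (𝓝 c) := by
    have : Continuous fun ℓ : ℝ => (1 + s * ℓ) * c := by fun_prop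
    exact (this.tendsto' 0 c (by simp)).mono_left nhdsWithin_le_nhds
  have hwindow : Tendsto (fun ℓ : ℝ => Ioo ((1 - ℓ) * c) ((1 + ℓ) * c)) (𝓝[>] 0)
      (𝓝 c).smallSets := by
    simpa [← sub_eq_add_neg] using (hend (-1)).Ioo (hend 1)
  have hvol : (fun ℓ : ℝ => volume.real (Ioo ((1 - ℓ) * c) ((1 + ℓ) * c)))
      =ᶠ[𝓝[>] 0] fun ℓ => 2 * ℓ * c := by
    filter_upwards [self_mem_nhdsWithin] with ℓ (hℓ : 0 < ℓ)
    rw [Real.volume_real_Ioo_of_le (by nlinarith)]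
    ring
  have hlittleO := (hf.continuousAt (Ioi_mem_nhds hc)).integral_sub_linear_isLittleO_ae
    (hf.stronglyMeasurableAtFilter isOpen_Ioi c hc) hwindow _ hvol
  rw [← tendsto_sub_nhds_zero_iff]
  have hratio := hlittleO.tendsto_div_nhds_zero.mul_const c
  rw [zero_mul] at hratio
  refine hratio.congr' ?_
  filter_upwards [self_mem_nhdsWithin] with ℓ (hℓ : 0 < ℓ)
  simp only [smul_eq_mul]
  field_simp

theorem tendsto_inv_mul_setLIntegral_Ioo {f : ℝ → ℝ} {c : ℝ} (hc : 0 < c)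
    (hf : ContinuousOn f (Ioi 0)) (hf₀ : ∀ v, 0 < v → 0 ≤ f v) :
    Tendsto (fun ℓ : ℝ => (ENNReal.ofReal (2 * ℓ))⁻¹ *
        ∫⁻ v in Ioo ((1 - ℓ) * c) ((1 + ℓ) * c), ENNReal.ofReal (f v))
      (𝓝[>] 0) (𝓝 (ENNReal.ofReal (c * f c))) := by
  refine ((ENNReal.continuous_ofReal.tendsto _).comp
    (tendsto_inv_mul_setIntegral_Ioo hc hf)).congr' ?_
  filter_upwards [Ioo_mem_nhdsGT zero_lt_one] with ℓ ⟨hℓ₀, hℓ₁⟩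
  have hwindow : Icc ((1 - ℓ) * c) ((1 + ℓ) * c) ⊆ Ioi 0 :=
    fun v hv => lt_of_lt_of_le (by nlinarith) hv.1
  have hint : IntegrableOn f (Ioo ((1 - ℓ) * c) ((1 + ℓ) * c)) :=
    (hf.mono hwindow).integrableOn_Icc.mono_set Ioo_subset_Icc_self
  have hnonneg : 0 ≤ᵐ[volume.restrict (Ioo ((1 - ℓ) * c) ((1 + ℓ) * c))] f :=
    ae_restrict_of_forall_mem measurableSet_Ioo fun v hv =>
      hf₀ v (hwindow (Ioo_subset_Icc_self hv))
  rw [Function.comp_apply, ENNReal.ofReal_mul (by positivity),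
    ofReal_integral_eq_lintegral_ofReal hint hnonneg, ENNReal.ofReal_inv_of_pos (by positivity)]

theorem inv_mul_setLIntegral_Ioo_le {g : ℝ → ℝ≥0∞} {c ℓ : ℝ} {C : ℝ≥0∞}
    (hℓ : 0 < ℓ) (hg : ∀ v ∈ Ioo ((1 - ℓ) * c) ((1 + ℓ) * c), g v ≤ C) :
    (ENNReal.ofReal (2 * ℓ))⁻¹ * ∫⁻ v in Ioo ((1 - ℓ) * c) ((1 + ℓ) * c), g v
      ≤ ENNReal.ofReal c * C := by
  calc (ENNReal.ofReal (2 * ℓ))⁻¹ * ∫⁻ v in Ioo ((1 - ℓ) * c) ((1 + ℓ) * c), g v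
      ≤ (ENNReal.ofReal (2 * ℓ))⁻¹ * (C * ENNReal.ofReal (2 * ℓ * c)) := by
        gcongr
        refine (setLIntegral_mono' measurableSet_Ioo hg).trans_eq ?_
        rw [setLIntegral_const, Real.volume_Ioo]
        ring_nf
    _ = ENNReal.ofReal c * C := by
        rw [ENNReal.ofReal_mul (show (0 : ℝ) ≤ 2 * ℓ by positivity), mul_left_comm,
          ENNReal.inv_mul_cancel_left (by simpa using hℓ) ENNReal.ofReal_ne_top, mul_comm]

theorem rpow_sum_sq_le_eight_mul {u v c : ℝ} (hc : 0 < c) (hv : c / 2 ≤ v) :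
    (u ^ 2 + v ^ 2) ^ (-(3 : ℝ) / 2) ≤ 8 * (u ^ 2 + c ^ 2) ^ (-(3 : ℝ) / 2) := by
  have hfour : (4 : ℝ) ^ (-(3 : ℝ) / 2) = 8⁻¹ := by
    rw [show (4 : ℝ) = 2 ^ (2 : ℝ) by norm_num, ← Real.rpow_mul (by norm_num)]
    norm_num [Real.rpow_neg]
  calc (u ^ 2 + v ^ 2) ^ (-(3 : ℝ) / 2) ≤ ((u ^ 2 + c ^ 2) / 4) ^ (-(3 : ℝ) / 2) :=
        Real.rpow_le_rpow_of_nonpos (by positivity) (by nlinarith) (by norm_num)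
    _ = 8 * (u ^ 2 + c ^ 2) ^ (-(3 : ℝ) / 2) := by
        rw [Real.div_rpow (by positivity) (by norm_num), hfour]
        ring

theorem rpow_sum_sq_le_rpow_neg_three {s t : ℝ} (ht : 0 < t) (hts : t ^ 2 ≤ s) :
    s ^ (-(3 : ℝ) / 2) ≤ t ^ (-3 : ℝ) := by
  calc s ^ (-(3 : ℝ) / 2) ≤ (t ^ 2) ^ (-(3 : ℝ) / 2) :=
        Real.rpow_le_rpow_of_nonpos (by positivity) hts (by norm_num)
    _ = t ^ (-3 : ℝ) := by
        rw [← Real.rpow_natCast, ← Real.rpow_mul ht.le]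
        norm_num

theorem setLIntegral_ofReal_lt_top_of_le {α : Type*} [MeasurableSpace α] {μ : Measure α}
    {s : Set α} {f g : α → ℝ} (hs : MeasurableSet s) (hg : IntegrableOn g s μ)
    (hfg : ∀ x ∈ s, f x ≤ g x) : ∫⁻ x in s, ENNReal.ofReal (f x) ∂μ < ∞ :=
  (setLIntegral_mono' hs fun x hx => ENNReal.ofReal_le_ofReal (hfg x hx)).trans_lt
    hg.setLIntegral_lt_top

theorem lintegral_mul_rpow_sum_sq_lt_top {q : ℝ → ℝ} (hq : AntitoneOn q (Ioi 0))
    (hqpos : ∀ x, 0 < x → 0 < q x) :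
    ∫⁻ u in Ioi 0, ENNReal.ofReal (q u * (u ^ 2 + q u ^ 2) ^ (-(3 : ℝ) / 2)) < ∞ := by
  have hq₁ := hqpos 1 one_pos
  rw [← Ioc_union_Ioi_eq_Ioi zero_le_one, lintegral_union measurableSet_Ioi Ioc_disjoint_Ioi_same]
  refine ENNReal.add_lt_top.mpr ⟨?_, ?_⟩
  · refine setLIntegral_ofReal_lt_top_of_le measurableSet_Ioc
      (integrableOn_const (C := q 1 ^ (-2 : ℝ)) measure_Ioc_lt_top.ne) fun u ⟨hu₀, hu₁⟩ => ?_
    have hqu := hqpos u hu₀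
    calc q u * (u ^ 2 + q u ^ 2) ^ (-(3 : ℝ) / 2) ≤ q u * q u ^ (-3 : ℝ) := by
          gcongr
          exact rpow_sum_sq_le_rpow_neg_three hqu (by nlinarith)
      _ = q u ^ (-2 : ℝ) := by
          rw [← Real.rpow_one_add' hqu.le (by norm_num)]
          norm_num
      _ ≤ q 1 ^ (-2 : ℝ) :=
          Real.rpow_le_rpow_of_nonpos hq₁ (hq hu₀ (mem_Ioi.2 one_pos) hu₁) (by norm_num)
  · refine setLIntegral_ofReal_lt_top_of_le measurableSet_Ioi
      ((integrableOn_Ioi_rpow_of_lt (by norm_num : (-3 : ℝ) < -1) one_pos).const_mul (q 1))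
      fun u (hu : 1 < u) => ?_
    have hu₀ : 0 < u := one_pos.trans hu
    have hqu := hqpos u hu₀
    calc q u * (u ^ 2 + q u ^ 2) ^ (-(3 : ℝ) / 2) ≤ q u * u ^ (-3 : ℝ) := by
          gcongr
          exact rpow_sum_sq_le_rpow_neg_three hu₀ (by nlinarith)
      _ ≤ q 1 * u ^ (-3 : ℝ) := by
          gcongr
          exact hq (mem_Ioi.2 one_pos) hu₀ hu.le

theorem Measurable.setLIntegral_Ioo {α : Type*} [MeasurableSpace α] {f : α × ℝ → ℝ≥0∞}
    (hf : Measurable f) {a b : α → ℝ} (ha : Measurable a) (hb : Measurable b) :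
    Measurable fun x => ∫⁻ y in Ioo (a x) (b x), f (x, y) := by
  have hS : MeasurableSet {p : α × ℝ | a p.1 < p.2 ∧ p.2 < b p.1} :=
    (measurableSet_lt (ha.comp measurable_fst) measurable_snd).inter
      (measurableSet_lt measurable_snd (hb.comp measurable_fst))
  have hsection (x : α) : ∫⁻ y in Ioo (a x) (b x), f (x, y)
      = ∫⁻ y, {p : α × ℝ | a p.1 < p.2 ∧ p.2 < b p.1}.indicator f (x, y) := by
    rw [← lintegral_indicator measurableSet_Ioo]
    rfl
  simpa only [hsection] using (hf.indicator hS).lintegral_prod_right'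

theorem aemeasurable_setLIntegral_Ioo {μ : Measure ℝ} {f : ℝ × ℝ → ℝ≥0∞} {s : Set (ℝ × ℝ)}
    (hs : IsOpen s) (hf : ContinuousOn f s) {t : Set ℝ} (ht : MeasurableSet t) {a b : ℝ → ℝ}
    (ha : AEMeasurable a (μ.restrict t)) (hb : AEMeasurable b (μ.restrict t))
    (hst : ∀ x ∈ t, ∀ y ∈ Ioo (a x) (b x), (x, y) ∈ s) :
    AEMeasurable (fun x => ∫⁻ y in Ioo (a x) (b x), f (x, y)) (μ.restrict t) := by
  classical
  have hfs : Measurable (s.indicator f) := by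
    rw [← piecewise_eq_indicator]
    exact hf.measurable_piecewise continuousOn_const hs.measurableSet
  refine ⟨_, hfs.setLIntegral_Ioo ha.measurable_mk hb.measurable_mk, ?_⟩
  filter_upwards [ae_restrict_mem ht, ha.ae_eq_mk, hb.ae_eq_mk] with x hx hax hbx
  rw [← hax, ← hbx]
  exact setLIntegral_congr_fun measurableSet_Ioo fun y hy => (indicator_of_mem (hst x hx y hy) f).symm

theorem inv_mul_setLIntegral_Ioo_le_of_le_kernel {K u c ℓ : ℝ} (hK : 0 ≤ K) {f : ℝ → ℝ}
    (hf : ∀ v, 0 < v → f v ≤ K * (u ^ 2 + v ^ 2) ^ (-(3 : ℝ) / 2)) (hc : 0 < c)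
    (hℓ₀ : 0 < ℓ) (hℓ : ℓ ≤ 1 / 2) :
    (ENNReal.ofReal (2 * ℓ))⁻¹ * ∫⁻ v in Ioo ((1 - ℓ) * c) ((1 + ℓ) * c), ENNReal.ofReal (f v)
      ≤ ENNReal.ofReal (8 * K) * ENNReal.ofReal (c * (u ^ 2 + c ^ 2) ^ (-(3 : ℝ) / 2)) := by
  calc _ ≤ ENNReal.ofReal c * ENNReal.ofReal (K * (8 * (u ^ 2 + c ^ 2) ^ (-(3 : ℝ) / 2))) := by
        refine inv_mul_setLIntegral_Ioo_le hℓ₀ fun v ⟨hv, _⟩ => ENNReal.ofReal_le_ofReal ?_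
        have hcv : c / 2 ≤ v := by nlinarith
        exact (hf v (by linarith)).trans
          (mul_le_mul_of_nonneg_left (rpow_sum_sq_le_eight_mul hc hcv) hK)
    _ = _ := by
        rw [← ENNReal.ofReal_mul hc.le, ← ENNReal.ofReal_mul (by positivity)]
        ring_nf

/-- Consistency of the variance-integral estimator: for a continuous density `η`
bounded by `K (x²+y²)^{-3/2}` and non-increasing `q : (0,∞) → (0,∞)`,
`(1/(2ℓ)) ∫_0^∞ ∫_{(1-ℓ)q(u)}^{(1+ℓ)q(u)} η(u,v) dv du → ∫_0^∞ q(u) η(u,q(u)) du`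
as `ℓ ↓ 0`, and the limit is finite. -/
theorem variance_integral_estimator_limit
    (K : ℝ) (hK : 0 < K) (η : ℝ × ℝ → ℝ)
    (hηc : ContinuousOn η {p : ℝ × ℝ | 0 < p.1 ∧ 0 < p.2})
    (hηpos : ∀ x y : ℝ, 0 < x → 0 < y → 0 ≤ η (x, y))
    (hηbd : ∀ x y : ℝ, 0 < x → 0 < y → η (x, y) ≤ K * (x ^ 2 + y ^ 2) ^ (-(3 : ℝ) / 2))
    (q : ℝ → ℝ) (hq : AntitoneOn q (Set.Ioi 0)) (hqpos : ∀ x : ℝ, 0 < x → 0 < q x) :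
    Tendsto
      (fun ℓ : ℝ => (ENNReal.ofReal (2 * ℓ))⁻¹ *
        ∫⁻ u in Set.Ioi (0 : ℝ), ∫⁻ v in Set.Ioo ((1 - ℓ) * q u) ((1 + ℓ) * q u),
          ENNReal.ofReal (η (u, v)))
      (nhdsWithin 0 (Set.Ioi 0))
      (nhds (∫⁻ u in Set.Ioi (0 : ℝ), ENNReal.ofReal (q u * η (u, q u)))) ∧
    (∫⁻ u in Set.Ioi (0 : ℝ), ENNReal.ofReal (q u * η (u, q u))) < ⊤ := by
  set F : ℝ → ℝ → ℝ≥0∞ := fun ℓ u => (ENNReal.ofReal (2 * ℓ))⁻¹ *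
    ∫⁻ v in Ioo ((1 - ℓ) * q u) ((1 + ℓ) * q u), ENNReal.ofReal (η (u, v))
  set B : ℝ → ℝ≥0∞ := fun u =>
    ENNReal.ofReal (8 * K) * ENNReal.ofReal (q u * (u ^ 2 + q u ^ 2) ^ (-(3 : ℝ) / 2))
  have hlim (u : ℝ) (hu : u ∈ Ioi 0) :
      Tendsto (F · u) (𝓝[>] 0) (𝓝 (ENNReal.ofReal (q u * η (u, q u)))) :=
    tendsto_inv_mul_setLIntegral_Ioo (hqpos u hu)
      (hηc.comp (Continuous.prodMk_right u).continuousOn fun _ hv => ⟨hu, hv⟩)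
      (hηpos u · hu)
  have hbound : ∀ᶠ ℓ in 𝓝[>] 0, ∀ u ∈ Ioi 0, F ℓ u ≤ B u := by
    filter_upwards [Ioc_mem_nhdsGT (by norm_num : (0 : ℝ) < 1 / 2)] with ℓ ⟨hℓ₀, hℓ⟩ u hu
    exact inv_mul_setLIntegral_Ioo_le_of_le_kernel hK.le (hηbd u · hu) (hqpos u hu) hℓ₀ hℓ
  have hmeas : ∀ᶠ ℓ in 𝓝[>] 0, AEMeasurable (F ℓ) (volume.restrict (Ioi 0)) := by
    have hqm := aemeasurable_restrict_of_antitoneOn (μ := volume) measurableSet_Ioi hq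
    have hquadrant : IsOpen {p : ℝ × ℝ | 0 < p.1 ∧ 0 < p.2} :=
      (isOpen_lt continuous_const continuous_fst).inter (isOpen_lt continuous_const continuous_snd)
    filter_upwards [Ioo_mem_nhdsGT zero_lt_one] with ℓ ⟨hℓ₀, hℓ₁⟩
    refine (aemeasurable_setLIntegral_Ioo hquadrant
      (ENNReal.continuous_ofReal.comp_continuousOn hηc) measurableSet_Ioi
      (hqm.const_mul _) (hqm.const_mul _) fun u hu v hv => ⟨hu, ?_⟩).const_mul _
    exact lt_trans (mul_pos (by linarith) (hqpos u hu)) hv.1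
  have hfin : ∫⁻ u in Ioi 0, B u < ∞ := by
    rw [lintegral_const_mul' _ _ ENNReal.ofReal_ne_top]
    exact ENNReal.mul_lt_top ENNReal.ofReal_lt_top (lintegral_mul_rpow_sum_sq_lt_top hq hqpos)
  refine ⟨?_, ?_⟩
  · refine (tendsto_lintegral_filter_of_dominated_convergence' B hmeas
      (hbound.mono fun _ h => ae_restrict_of_forall_mem measurableSet_Ioi h) hfin.ne
      (ae_restrict_of_forall_mem measurableSet_Ioi hlim)).congr' ?_
    filter_upwards [self_mem_nhdsWithin] with ℓ (hℓ : 0 < ℓ)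
    exact lintegral_const_mul' _ _ (ENNReal.inv_ne_top.2 (by simpa using hℓ))
  · exact (setLIntegral_mono' measurableSet_Ioi fun u hu =>
      le_of_tendsto (hlim u hu) (hbound.mono fun _ h => h u hu)).trans_lt hfin
end
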